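/- Let 𝒫 be a finite set of integer pairs p = (p₁,p₂) with 0 ≤ p₁ ≤ p₂ and p₂ ≠ 0, and let {A_p}_{p∈𝒫} be real numbers with 8 Σ_{p∈𝒫} c_p A_p = 1 and Σ_{p∈𝒫} (p₁²+p₂²) c_p A_p ≠ 0; set M_𝒫 = (1/2)(Σ_{p∈𝒫} (p₁²+p₂²) c_p A_p)⁻¹. Let f and g be continuously differentiable on an open neighborhood of the unit square S = [0,1]². For each integer m ≥ 0 define 𝓔_m(f,g) = (M_𝒫/2) Σ_{p∈𝒫} A_p Σ ( B_{w'}(f) − B_w(f) )( B_{w'}(g) − B_w(g) ), where the inner sum is over all ordered pairs of words w, w' of length m in {1,2,3,4} such that the m-cells F_{w'}S and F_wS are p-neighbors. Then lim_{m→∞} 𝓔_m(f,g) = ∫_S ∇f · ∇g dμ. -/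

import Mathlib

open MeasureTheory Real Filter Topology

noncomputable section

/-- The `l`-square centered at `x`. -/
def Dsq (x : ℝ × ℝ) (l : ℝ) : Set (ℝ × ℝ) :=
  Set.Icc (x.1 - l / 2) (x.1 + l / 2) ×ˢ Set.Icc (x.2 - l / 2) (x.2 + l / 2)

/-- `I(f,x,l)`: the average of `f` over the `l`-square centered at `x`. -/
def Iavg (f : ℝ × ℝ → ℝ) (x : ℝ × ℝ) (l : ℝ) : ℝ :=
  (1 / l ^ 2) * ∫ ξ in Dsq x l, f ξ

/-- `D(x',l)` is a `p`-neighbor of `D(x,l)`. -/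
def isNbr (p : ℤ × ℤ) (l : ℝ) (x x' : ℝ × ℝ) : Prop :=
  (|x'.1 - x.1| = (p.1 : ℝ) * l ∧ |x'.2 - x.2| = (p.2 : ℝ) * l) ∨
    (|x'.1 - x.1| = (p.2 : ℝ) * l ∧ |x'.2 - x.2| = (p.1 : ℝ) * l)

/-- `I_p(f,x,l)`: sum of averages over all `p`-neighbors of `D(x,l)`. -/
def Ipavg (f : ℝ × ℝ → ℝ) (p : ℤ × ℤ) (x : ℝ × ℝ) (l : ℝ) : ℝ :=
  ∑ᶠ x' ∈ {x' : ℝ × ℝ | isNbr p l x x'}, Iavg f x' l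

/-- The constant `c_p` (for integer pairs with `0 ≤ p₁ ≤ p₂`). -/
def cP (p : ℤ × ℤ) : ℝ :=
  if p.1 = 0 ∧ p.2 = 0 then 1 / 8 else if p.1 = 0 ∨ p.1 = p.2 then 1 / 2 else 1

/-- The constant `T_p^(k)`. -/
def Tc (p : ℤ × ℤ) (k : ℕ) : ℝ :=
  2 * cP p *
    (((2 * (p.1 : ℂ) + 1) + (2 * (p.2 : ℂ) + 1) * Complex.I) ^ (4 * k + 2)
      - ((2 * (p.1 : ℂ) - 1) + (2 * (p.2 : ℂ) + 1) * Complex.I) ^ (4 * k + 2)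
      + ((2 * (p.1 : ℂ) - 1) + (2 * (p.2 : ℂ) - 1) * Complex.I) ^ (4 * k + 2)
      - ((2 * (p.1 : ℂ) + 1) + (2 * (p.2 : ℂ) - 1) * Complex.I) ^ (4 * k + 2)).im

/-- The polynomial harmonic function `f_n^x`. -/
def fP (x : ℝ × ℝ) (n : ℕ) (ξ : ℝ × ℝ) : ℝ :=
  ∑ j ∈ Finset.range (n / 2 + 1),
    (-1 : ℝ) ^ j * (ξ.1 - x.1) ^ (n - 2 * j) * (ξ.2 - x.2) ^ (2 * j) /
      (((n - 2 * j).factorial : ℝ) * ((2 * j).factorial : ℝ))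

/-- The polynomial harmonic function `g_n^x`. -/
def gP (x : ℝ × ℝ) (n : ℕ) (ξ : ℝ × ℝ) : ℝ :=
  ∑ j ∈ Finset.range ((n - 1) / 2 + 1),
    (-1 : ℝ) ^ j * (ξ.1 - x.1) ^ (n - 2 * j - 1) * (ξ.2 - x.2) ^ (2 * j + 1) /
      (((n - 2 * j - 1).factorial : ℝ) * ((2 * j + 1).factorial : ℝ))

/-- Partial derivative in the first coordinate. -/
def pd1 (f : ℝ × ℝ → ℝ) (y : ℝ × ℝ) : ℝ := fderiv ℝ f y (1, 0)

/-- Partial derivative in the second coordinate. -/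
def pd2 (f : ℝ × ℝ → ℝ) (y : ℝ × ℝ) : ℝ := fderiv ℝ f y (0, 1)

/-- `h` is harmonic on the open set `Ω`. -/
def HarmonicOn (h : ℝ × ℝ → ℝ) (Ω : Set (ℝ × ℝ)) : Prop :=
  ContDiffOn ℝ 2 h Ω ∧ ∀ y ∈ Ω, pd1 (pd1 h) y + pd2 (pd2 h) y = 0

/-- `‖𝒫‖ = max_{p ∈ 𝒫} ‖2p+(1,1)‖`. -/
def PNorm (P : Finset (ℤ × ℤ)) : ℝ :=
  sSup ((fun p : ℤ × ℤ =>
    Real.sqrt ((2 * (p.1 : ℝ) + 1) ^ 2 + (2 * (p.2 : ℝ) + 1) ^ 2)) '' ↑P)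

/-- The four corners of the unit square. -/
def qv : Fin 4 → ℝ × ℝ := ![(0, 0), (1, 0), (1, 1), (0, 1)]

/-- The contraction `F_i(x) = (x + q_i)/2`. -/
def Fc (i : Fin 4) (x : ℝ × ℝ) : ℝ × ℝ := ((x.1 + (qv i).1) / 2, (x.2 + (qv i).2) / 2)

/-- `F_w = F_{w₁} ∘ ⋯ ∘ F_{w_m}` for a word `w` of length `m`. -/
def Fword {m : ℕ} (w : Fin m → Fin 4) : ℝ × ℝ → ℝ × ℝ :=
  (List.ofFn w).foldr (fun i acc => Fc i ∘ acc) id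

/-- The center of the `m`-cell `F_w S`. -/
def cellCtr {m : ℕ} (w : Fin m → Fin 4) : ℝ × ℝ := Fword w (1 / 2, 1 / 2)

/-- `B_w(f)`: the average of `f` over the `m`-cell `F_w S` (a dyadic square of
side length `2⁻ᵐ` centered at `cellCtr w`). -/
def Bav (f : ℝ × ℝ → ℝ) {m : ℕ} (w : Fin m → Fin 4) : ℝ :=
  Iavg f (cellCtr w) ((1 / 2) ^ m)
open scoped Classical

/-- The discrete energy form `𝓔_m(f,g)` on the unit square. -/
def Em (P : Finset (ℤ × ℤ)) (A : ℤ × ℤ → ℝ) (f g : ℝ × ℝ → ℝ) (m : ℕ) : ℝ :=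
  (((1 / 2) * (∑ p ∈ P, ((p.1 : ℝ) ^ 2 + (p.2 : ℝ) ^ 2) * cP p * A p)⁻¹) / 2) *
    ∑ p ∈ P, A p *
      ∑ w : Fin m → Fin 4, ∑ w' : Fin m → Fin 4,
        if isNbr p ((1 / 2) ^ m) (cellCtr w) (cellCtr w') then
          (Bav f w' - Bav f w) * (Bav g w' - Bav g w)
        else 0

/-!
Index the `m`-cells by the dyadic grid `{0, …, 2 ^ m - 1}²`. A cell is a `p`-neighbour of another
exactly when the difference of their indices is one of the offsets `q` obtained from `p` by sign
changes and swapping the coordinates, so `𝓔_m(f, g)` is a combination of the energies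
`∑ₓ (B_{x+q} f - Bₓ f) (B_{x+q} g - Bₓ g)`. Uniform differentiability of `f` on the square makes
`2 ^ m (B_{x+q} f - Bₓ f)` uniformly close to `∂_q f` on the whole cell of `x`, so each of these
energies is a Riemann sum of `∂_q f ∂_q g` up to the `O(2 ^ m)` cells whose translate by `q`
leaves the square, which contribute `O(2 ^ (-m))`. Finally `∑_q ∂_q f ∂_q g = 4 c_p |p|² ∇f · ∇g`, and the
normalising constant `M_𝒫` cancels the resulting factor.
-/

theorem IsCompact.exists_norm_sub_sub_fderiv_le {E F : Type*}
    [NormedAddCommGroup E] [NormedSpace ℝ E] [NormedAddCommGroup F] [NormedSpace ℝ F]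
    {f : E → F} {s Ω : Set E} (hs : IsCompact s) (hsc : Convex ℝ s) (hΩ : IsOpen Ω)
    (hsΩ : s ⊆ Ω) (hf : ContDiffOn ℝ 1 f Ω) {ε : ℝ} (hε : 0 < ε) :
    ∃ δ > 0, ∀ ξ ∈ s, ∀ ζ ∈ s, ∀ η ∈ s, dist ζ ξ < δ → dist η ξ < δ →
      ‖f η - f ζ - fderiv ℝ f ξ (η - ζ)‖ ≤ ε * ‖η - ζ‖ := by
  obtain ⟨δ, hδ, hclose⟩ := Metric.uniformContinuousOn_iff.1
    (hs.uniformContinuousOn_of_continuous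
      ((hf.continuousOn_fderiv_of_isOpen hΩ le_rfl).mono hsΩ)) ε hε
  refine ⟨δ, hδ, fun ξ hξ ζ hζ η hη hζξ hηξ => ?_⟩
  have hderiv : ∀ z ∈ s ∩ Metric.ball ξ δ,
      HasFDerivWithinAt f (fderiv ℝ f z) (s ∩ Metric.ball ξ δ) z := fun z hz =>
    ((hf.differentiableOn one_ne_zero).differentiableAt
      (hΩ.mem_nhds (hsΩ hz.1))).hasFDerivAt.hasFDerivWithinAt
  refine (hsc.inter (convex_ball ξ δ)).norm_image_sub_le_of_norm_hasFDerivWithin_le' hderiv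
    (fun z hz => ?_) ⟨hζ, hζξ⟩ ⟨hη, hηξ⟩
  rw [← dist_eq_norm]
  exact (hclose z hz.1 ξ hξ hz.2).le

theorem abs_mul_sub_mul_le_of_le {a b a₀ b₀ K η : ℝ} (ha₀ : |a₀| ≤ K) (hb₀ : |b₀| ≤ K)
    (ha : |a - a₀| ≤ η) (hb : |b - b₀| ≤ η) : |a * b - a₀ * b₀| ≤ η * (2 * K + η) := by
  have hη : 0 ≤ η := (abs_nonneg _).trans ha
  have hb' : |b| ≤ K + η := by
    calc |b| = |b₀ + (b - b₀)| := by ring_nf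
      _ ≤ K + η := (abs_add_le _ _).trans (add_le_add hb₀ hb)
  calc |a * b - a₀ * b₀| = |(a - a₀) * b + a₀ * (b - b₀)| := by ring_nf
    _ ≤ η * (K + η) + K * η := by
      refine (abs_add_le _ _).trans (add_le_add ?_ ?_) <;> rw [abs_mul]
      · exact mul_le_mul ha hb' (abs_nonneg _) hη
      · exact mul_le_mul ha₀ hb (abs_nonneg _) ((abs_nonneg _).trans ha₀)
    _ = η * (2 * K + η) := by ring

section Squares

theorem Dsq_eq (x : ℝ × ℝ) (l : ℝ) : Dsq x l = Metric.closedBall x (l / 2) := by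
  ext ξ
  simp only [Dsq, Set.mem_prod, Set.mem_Icc, Metric.mem_closedBall, Prod.dist_eq,
    Real.dist_eq, max_le_iff, abs_le]
  constructor <;> rintro ⟨⟨h1, h2⟩, h3, h4⟩ <;> refine ⟨⟨?_, ?_⟩, ?_, ?_⟩ <;> linarith

theorem measureReal_Dsq (x : ℝ × ℝ) {l : ℝ} (hl : 0 ≤ l) : volume.real (Dsq x l) = l ^ 2 := by
  rw [measureReal_def, Dsq, Measure.volume_eq_prod, Measure.prod_prod, Real.volume_Icc,
    Real.volume_Icc, ← ENNReal.ofReal_mul (by linarith), ENNReal.toReal_ofReal (by nlinarith)]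
  ring

theorem isCompact_Dsq (x : ℝ × ℝ) (l : ℝ) : IsCompact (Dsq x l) := by
  rw [Dsq_eq]; exact isCompact_closedBall x _

theorem volume_Dsq_lt_top (x : ℝ × ℝ) (l : ℝ) : volume (Dsq x l) < ⊤ :=
  (isCompact_Dsq x l).measure_lt_top

theorem integral_Dsq_add (f : ℝ × ℝ → ℝ) (x v : ℝ × ℝ) (l : ℝ) :
    ∫ ξ in Dsq (x + v) l, f ξ = ∫ ξ in Dsq x l, f (ξ + v) := by
  have hpre : (· + v) ⁻¹' Dsq (x + v) l = Dsq x l := by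
    ext ξ; simp [Dsq_eq]
  rw [← hpre, (measurePreserving_add_right volume v).setIntegral_preimage_emb
    (measurableEmbedding_addRight v)]

theorem abs_Iavg_sub_le {F : ℝ × ℝ → ℝ} {x : ℝ × ℝ} {l c ε : ℝ} (hl : 0 < l)
    (hF : IntegrableOn F (Dsq x l)) (hbound : ∀ ξ ∈ Dsq x l, |F ξ - c| ≤ ε) :
    |Iavg F x l - c| ≤ ε := by
  have hfin := volume_Dsq_lt_top x l
  have hvol := measureReal_Dsq x hl.le
  have hint : ∫ ξ in Dsq x l, (F ξ - c) = l ^ 2 * (Iavg F x l - c) := by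
    rw [integral_sub hF (integrableOn_const hfin.ne), setIntegral_const, hvol, Iavg]
    field_simp
    ring
  have hle := norm_setIntegral_le_of_norm_le_const (f := fun ξ => F ξ - c) hfin hbound
  rw [hint, hvol, Real.norm_eq_abs, abs_mul, abs_of_pos (by positivity)] at hle
  exact le_of_mul_le_mul_left (by linarith) (by positivity : 0 < l ^ 2)

theorem abs_setIntegral_Dsq_le {F : ℝ × ℝ → ℝ} {x : ℝ × ℝ} {l ε : ℝ} (hl : 0 ≤ l)
    (hF : ∀ ξ ∈ Dsq x l, |F ξ| ≤ ε) : |∫ ξ in Dsq x l, F ξ| ≤ ε * l ^ 2 := by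
  simpa only [measureReal_Dsq x hl, Real.norm_eq_abs] using
    norm_setIntegral_le_of_norm_le_const (f := F) (volume_Dsq_lt_top x l) hF

theorem add_mem_Dsq_add {ζ x : ℝ × ℝ} {l : ℝ} (hζ : ζ ∈ Dsq x l) (v : ℝ × ℝ) :
    ζ + v ∈ Dsq (x + v) l := by
  rw [Dsq_eq] at hζ ⊢; simpa using hζ

theorem dist_le_of_mem_Dsq {ζ ξ x : ℝ × ℝ} {l : ℝ} (hζ : ζ ∈ Dsq x l) (hξ : ξ ∈ Dsq x l) :
    dist ζ ξ ≤ l := by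
  rw [Dsq_eq, Metric.mem_closedBall] at hζ hξ
  linarith [dist_triangle_right ζ ξ x]

theorem Iavg_add_sub_Iavg_div {f : ℝ × ℝ → ℝ} {x v : ℝ × ℝ} {l : ℝ}
    (hf : IntegrableOn f (Dsq x l)) (hfv : IntegrableOn (fun ζ => f (ζ + v)) (Dsq x l)) :
    (Iavg f (x + v) l - Iavg f x l) / l = Iavg (fun ζ => (f (ζ + v) - f ζ) / l) x l := by
  simp only [Iavg, integral_Dsq_add, integral_div, integral_sub hfv hf]
  ring

end Squares

section DyadicGrid

def side (m : ℕ) : ℝ := (1 / 2) ^ m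

def unitSquare : Set (ℝ × ℝ) := Set.Icc 0 1 ×ˢ Set.Icc 0 1

def grid (m : ℕ) : Finset (ℤ × ℤ) := Finset.Ico 0 (2 ^ m) ×ˢ Finset.Ico 0 (2 ^ m)

def gridCtr (m : ℕ) (x : ℤ × ℤ) : ℝ × ℝ :=
  (((x.1 : ℝ) + 1 / 2) * side m, ((x.2 : ℝ) + 1 / 2) * side m)

theorem convex_unitSquare : Convex ℝ unitSquare := (convex_Icc 0 1).prod (convex_Icc 0 1)

theorem isCompact_unitSquare : IsCompact unitSquare := isCompact_Icc.prod isCompact_Icc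

theorem side_pos (m : ℕ) : 0 < side m := by unfold side; positivity

theorem two_pow_mul_side (m : ℕ) : 2 ^ m * side m = 1 := by
  rw [side, ← mul_pow]; norm_num

theorem tendsto_side_atTop : Tendsto side atTop (𝓝 0) :=
  tendsto_pow_atTop_nhds_zero_of_lt_one (by norm_num) (by norm_num)

theorem card_Ico_two_pow (m : ℕ) : (Finset.Ico (0 : ℤ) (2 ^ m)).card = 2 ^ m := by
  rw [Int.card_Ico, sub_zero]
  exact_mod_cast Int.toNat_natCast (2 ^ m)

theorem card_grid (m : ℕ) : ((grid m).card : ℝ) * side m ^ 2 = 1 := by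
  rw [grid, Finset.card_product, card_Ico_two_pow]
  push_cast
  calc (2 : ℝ) ^ m * 2 ^ m * side m ^ 2 = (2 ^ m * side m) ^ 2 := by ring
    _ = 1 := by rw [two_pow_mul_side, one_pow]

theorem gridCtr_add (m : ℕ) (x q : ℤ × ℤ) :
    gridCtr m (x + q) = gridCtr m x + side m • ((q.1 : ℝ), (q.2 : ℝ)) := by
  simp only [gridCtr, Prod.fst_add, Prod.snd_add, Int.cast_add, Prod.smul_mk, smul_eq_mul,
    Prod.mk_add_mk]
  congr 1 <;> ring

theorem Dsq_gridCtr (m : ℕ) (x : ℤ × ℤ) : Dsq (gridCtr m x) (side m) =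
    Set.Icc (x.1 * side m) ((x.1 + 1) * side m) ×ˢ Set.Icc (x.2 * side m) ((x.2 + 1) * side m) := by
  simp only [Dsq, gridCtr]
  congr 2 <;> ring

theorem add_one_mul_side_le_one {m : ℕ} {a : ℤ} (ha : a < 2 ^ m) : ((a : ℝ) + 1) * side m ≤ 1 := by
  have h : (a : ℝ) + 1 ≤ 2 ^ m := by exact_mod_cast ha
  calc ((a : ℝ) + 1) * side m ≤ 2 ^ m * side m := by gcongr; exact (side_pos m).le
    _ = 1 := two_pow_mul_side m

theorem Icc_dyadic_subset {m : ℕ} {a : ℤ} (ha : a ∈ Finset.Ico 0 (2 ^ m)) :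
    Set.Icc (a * side m) ((a + 1) * side m) ⊆ Set.Icc 0 1 := by
  rw [Finset.mem_Ico] at ha
  have h0 : (0 : ℝ) ≤ a := by exact_mod_cast ha.1
  exact Set.Icc_subset_Icc (mul_nonneg h0 (side_pos m).le) (add_one_mul_side_le_one ha.2)

theorem Dsq_gridCtr_subset {m : ℕ} {x : ℤ × ℤ} (hx : x ∈ grid m) :
    Dsq (gridCtr m x) (side m) ⊆ unitSquare := by
  rw [grid, Finset.mem_product] at hx
  rw [Dsq_gridCtr]
  exact Set.prod_mono (Icc_dyadic_subset hx.1) (Icc_dyadic_subset hx.2)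

theorem biUnion_Ico_dyadic (m : ℕ) :
    ⋃ a ∈ Finset.Ico (0 : ℤ) (2 ^ m), Set.Ico (a * side m) ((a + 1) * side m) = Set.Ico 0 1 := by
  have hs := side_pos m
  ext t
  simp only [Set.mem_iUnion, Finset.mem_Ico, Set.mem_Ico, exists_prop]
  constructor
  · rintro ⟨a, ⟨ha0, ha⟩, h1, h2⟩
    have h0 : (0 : ℝ) ≤ a := by exact_mod_cast ha0
    exact ⟨(mul_nonneg h0 hs.le).trans h1, h2.trans_le (add_one_mul_side_le_one ha)⟩
  · rintro ⟨h0, h1⟩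
    refine ⟨⌊t / side m⌋, ⟨Int.floor_nonneg.2 (by positivity), Int.floor_lt.2 ?_⟩,
      (le_div_iff₀ hs).1 (Int.floor_le _), (div_lt_iff₀ hs).1 (Int.lt_floor_add_one _)⟩
    rw [div_lt_iff₀ hs]
    push_cast
    rwa [two_pow_mul_side]

theorem integral_unitSquare_eq_sum {h : ℝ × ℝ → ℝ} (hh : IntegrableOn h unitSquare) (m : ℕ) :
    ∫ ξ in unitSquare, h ξ = ∑ x ∈ grid m, ∫ ξ in Dsq (gridCtr m x) (side m), h ξ := by
  set cell : ℤ × ℤ → Set (ℝ × ℝ) := fun x =>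
    Set.Ico (x.1 * side m) ((x.1 + 1) * side m) ×ˢ Set.Ico (x.2 * side m) ((x.2 + 1) * side m)
  have hcell : ∀ x, Dsq (gridCtr m x) (side m) =ᵐ[volume] cell x := fun x => by
    rw [Dsq_gridCtr, Measure.volume_eq_prod]
    exact Measure.set_prod_ae_eq Ico_ae_eq_Icc.symm Ico_ae_eq_Icc.symm
  have hunion : ⋃ x ∈ grid m, cell x = Set.Ico 0 1 ×ˢ Set.Ico 0 1 := by
    rw [← biUnion_Ico_dyadic m]
    ext ξ
    simp only [cell, grid, Set.mem_iUnion, Set.mem_prod, Finset.mem_product, exists_prop,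
      Prod.exists]
    constructor
    · rintro ⟨a, b, ⟨ha, hb⟩, hξa, hξb⟩
      exact ⟨⟨a, ha, hξa⟩, ⟨b, hb, hξb⟩⟩
    · rintro ⟨⟨a, ha, hξa⟩, ⟨b, hb, hξb⟩⟩
      exact ⟨a, b, ⟨ha, hb⟩, hξa, hξb⟩
  have hdisj : Pairwise (Function.onFun Disjoint fun a : ℤ =>
      Set.Ico (a * side m) ((a + 1) * side m)) := by
    simpa only [zsmul_eq_mul, Int.cast_add, Int.cast_one] using
      Set.pairwise_disjoint_Ico_zsmul (side m)
  have hsq : unitSquare =ᵐ[volume] Set.Ico (0 : ℝ) 1 ×ˢ Set.Ico (0 : ℝ) 1 := by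
    rw [unitSquare, Measure.volume_eq_prod]
    exact Measure.set_prod_ae_eq Ico_ae_eq_Icc.symm Ico_ae_eq_Icc.symm
  rw [setIntegral_congr_set hsq, ← hunion, integral_biUnion_finset]
  · exact Finset.sum_congr rfl fun x _ => setIntegral_congr_set (hcell x).symm
  · exact fun x _ => measurableSet_Ico.prod measurableSet_Ico
  · intro x _ y _ hxy
    by_cases h1 : x.1 = y.1
    · exact Set.disjoint_prod.2 (Or.inr (hdisj fun h2 => hxy (Prod.ext h1 h2)))
    · exact Set.disjoint_prod.2 (Or.inl (hdisj h1))
  · exact fun x hx => (hh.mono_set (Dsq_gridCtr_subset hx)).congr_set_ae (hcell x).symm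
end DyadicGrid

section RiemannSums

theorem abs_sum_grid_sub_integral_le {h : ℝ × ℝ → ℝ} (hh : IntegrableOn h unitSquare) {M : ℝ}
    (hM : ∀ ξ ∈ unitSquare, |h ξ| ≤ M) {m : ℕ} {good : Finset (ℤ × ℤ)} (hgood : good ⊆ grid m)
    {s : ℤ × ℤ → ℝ} {ε : ℝ} (hε : 0 ≤ ε)
    (hs : ∀ x ∈ good, ∀ ξ ∈ Dsq (gridCtr m x) (side m), |s x - h ξ| ≤ ε) :
    |∑ x ∈ good, side m ^ 2 * s x - ∫ ξ in unitSquare, h ξ|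
      ≤ ε + (grid m \ good).card * side m ^ 2 * M := by
  have hl := (side_pos m).le
  have hcell : ∀ x ∈ good, side m ^ 2 * s x - ∫ ξ in Dsq (gridCtr m x) (side m), h ξ
      = ∫ ξ in Dsq (gridCtr m x) (side m), (s x - h ξ) := fun x hx => by
    have hconst : IntegrableOn (fun _ => s x) (Dsq (gridCtr m x) (side m)) :=
      integrableOn_const (volume_Dsq_lt_top _ _).ne
    rw [integral_sub hconst (hh.mono_set (Dsq_gridCtr_subset (hgood hx))), setIntegral_const,
      measureReal_Dsq _ hl, smul_eq_mul]
  have hgoodsum : |∑ x ∈ good, (side m ^ 2 * s x - ∫ ξ in Dsq (gridCtr m x) (side m), h ξ)|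
      ≤ ε := by
    calc _ ≤ ∑ x ∈ good, ε * side m ^ 2 := by
          refine (Finset.abs_sum_le_sum_abs _ _).trans (Finset.sum_le_sum fun x hx => ?_)
          rw [hcell x hx]
          exact abs_setIntegral_Dsq_le hl (hs x hx)
      _ = good.card * side m ^ 2 * ε := by rw [Finset.sum_const, nsmul_eq_mul]; ring
      _ ≤ (grid m).card * side m ^ 2 * ε := by
          gcongr
      _ = ε := by rw [card_grid, one_mul]
  have hbadsum : |∑ x ∈ grid m \ good, ∫ ξ in Dsq (gridCtr m x) (side m), h ξ|
      ≤ (grid m \ good).card * side m ^ 2 * M := by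
    calc _ ≤ ∑ x ∈ grid m \ good, M * side m ^ 2 :=
          (Finset.abs_sum_le_sum_abs _ _).trans (Finset.sum_le_sum fun x hx =>
            abs_setIntegral_Dsq_le hl fun ξ hξ =>
              hM ξ (Dsq_gridCtr_subset (Finset.sdiff_subset hx) hξ))
      _ = _ := by rw [Finset.sum_const, nsmul_eq_mul]; ring
  have hsplit : ∑ x ∈ good, side m ^ 2 * s x - ∫ ξ in unitSquare, h ξ
      = ∑ x ∈ good, (side m ^ 2 * s x - ∫ ξ in Dsq (gridCtr m x) (side m), h ξ)
        - ∑ x ∈ grid m \ good, ∫ ξ in Dsq (gridCtr m x) (side m), h ξ := by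
    rw [integral_unitSquare_eq_sum hh m, ← Finset.sum_sdiff hgood, Finset.sum_sub_distrib]
    ring
  rw [hsplit]
  calc _ ≤ _ := abs_sub _ _
    _ ≤ _ := add_le_add hgoodsum hbadsum

def TendstoUniformlyOnCells (s : ℕ → ℤ × ℤ → ℝ) (h : ℝ × ℝ → ℝ)
    (good : ℕ → Finset (ℤ × ℤ)) : Prop :=
  ∀ ε > 0, ∀ᶠ m in atTop, ∀ x ∈ good m, ∀ ξ ∈ Dsq (gridCtr m x) (side m), |s m x - h ξ| ≤ ε

theorem TendstoUniformlyOnCells.tendsto_sum {s : ℕ → ℤ × ℤ → ℝ} {h : ℝ × ℝ → ℝ}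
    {good : ℕ → Finset (ℤ × ℤ)} (hs : TendstoUniformlyOnCells s h good)
    (hh : ContinuousOn h unitSquare) (hgood : ∀ m, good m ⊆ grid m) {C : ℕ}
    (hbad : ∀ m, (grid m \ good m).card ≤ C * 2 ^ m) :
    Tendsto (fun m => ∑ x ∈ good m, side m ^ 2 * s m x) atTop (𝓝 (∫ ξ in unitSquare, h ξ)) := by
  obtain ⟨M, hM⟩ := isCompact_unitSquare.exists_bound_of_continuousOn hh
  have hM0 : 0 ≤ M := (norm_nonneg _).trans (hM 0 ⟨⟨le_rfl, zero_le_one⟩, le_rfl, zero_le_one⟩)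
  have hbadlim : Tendsto (fun m => C * M * side m) atTop (𝓝 0) := by
    simpa using tendsto_side_atTop.const_mul (C * M)
  rw [Metric.tendsto_nhds]
  intro ε hε
  filter_upwards [hs (ε / 3) (by positivity), hbadlim.eventually (gt_mem_nhds (by positivity :
    0 < ε / 3))] with m hsm hbadm
  have hbound : ((grid m \ good m).card : ℝ) * side m ^ 2 * M ≤ C * M * side m := by
    calc _ ≤ (C * 2 ^ m : ℕ) * side m ^ 2 * M := by gcongr; exact hbad m
      _ = C * M * side m * (2 ^ m * side m) := by push_cast; ring
      _ = C * M * side m := by rw [two_pow_mul_side, mul_one]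
  rw [Real.dist_eq]
  calc _ ≤ ε / 3 + ((grid m \ good m).card : ℝ) * side m ^ 2 * M :=
        abs_sum_grid_sub_integral_le (hh.integrableOn_compact isCompact_unitSquare) hM (hgood m)
          (by positivity) hsm
    _ < ε := by linarith

end RiemannSums

section BoundaryCells

def offsetCells (q : ℤ × ℤ) (m : ℕ) : Finset (ℤ × ℤ) := (grid m).filter (· + q ∈ grid m)

theorem card_Ico_filter_add_not_mem_le (n c : ℤ) :
    ((Finset.Ico 0 n).filter (fun a => a + c ∉ Finset.Ico 0 n)).card ≤ c.natAbs := by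
  calc _ ≤ (Finset.Ico (n - c) n ∪ Finset.Ico 0 (-c)).card := by
        refine Finset.card_le_card fun a ha => ?_
        simp only [Finset.mem_filter, Finset.mem_Ico, Finset.mem_union] at ha ⊢
        omega
    _ ≤ _ := (Finset.card_union_le _ _).trans (by simp only [Int.card_Ico]; omega)

theorem card_grid_sdiff_offsetCells_le (q : ℤ × ℤ) (m : ℕ) :
    (grid m \ offsetCells q m).card ≤ (q.1.natAbs + q.2.natAbs) * 2 ^ m := by
  set I := Finset.Ico (0 : ℤ) (2 ^ m)
  calc _ ≤ (I.filter (· + q.1 ∉ I) ×ˢ I ∪ I ×ˢ I.filter (· + q.2 ∉ I)).card := by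
        refine Finset.card_le_card fun x hx => ?_
        simp only [offsetCells, grid, Finset.mem_sdiff, Finset.mem_filter, Finset.mem_product,
          Finset.mem_union, Prod.fst_add, Prod.snd_add] at hx ⊢
        tauto
    _ ≤ q.1.natAbs * 2 ^ m + 2 ^ m * q.2.natAbs := by
        refine (Finset.card_union_le _ _).trans ?_
        rw [Finset.card_product, Finset.card_product, card_Ico_two_pow]
        gcongr
        · exact card_Ico_filter_add_not_mem_le _ _
        · exact card_Ico_filter_add_not_mem_le _ _
    _ = _ := by ring

end BoundaryCells

section DifferenceQuotients

def diffQuot (f : ℝ × ℝ → ℝ) (q : ℤ × ℤ) (m : ℕ) (x : ℤ × ℤ) : ℝ :=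
  (Iavg f (gridCtr m (x + q)) (side m) - Iavg f (gridCtr m x) (side m)) / side m

theorem abs_diffQuot_sub_fderiv_le {f : ℝ × ℝ → ℝ} (hf : ContinuousOn f unitSquare) {ε δ : ℝ}
    (hlin : ∀ ξ ∈ unitSquare, ∀ ζ ∈ unitSquare, ∀ η ∈ unitSquare, dist ζ ξ < δ → dist η ξ < δ →
      ‖f η - f ζ - fderiv ℝ f ξ (η - ζ)‖ ≤ ε * ‖η - ζ‖)
    {q : ℤ × ℤ} {m : ℕ} (hm : side m * (‖((q.1 : ℝ), (q.2 : ℝ))‖ + 1) < δ) {x : ℤ × ℤ}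
    (hx : x ∈ offsetCells q m) {ξ : ℝ × ℝ} (hξ : ξ ∈ Dsq (gridCtr m x) (side m)) :
    |diffQuot f q m x - fderiv ℝ f ξ ((q.1 : ℝ), (q.2 : ℝ))| ≤ ε * ‖((q.1 : ℝ), (q.2 : ℝ))‖ := by
  obtain ⟨hx, hxq⟩ := Finset.mem_filter.1 hx
  set v := ((q.1 : ℝ), (q.2 : ℝ))
  set l := side m
  have hl : 0 < l := side_pos m
  set c := gridCtr m x
  have hcS : Dsq c l ⊆ unitSquare := Dsq_gridCtr_subset hx
  have hcvS : ∀ ζ ∈ Dsq c l, ζ + l • v ∈ unitSquare := fun ζ hζ =>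
    Dsq_gridCtr_subset hxq (gridCtr_add m x q ▸ add_mem_Dsq_add hζ (l • v))
  have hint : IntegrableOn f (Dsq c l) :=
    (hf.mono hcS).integrableOn_compact (isCompact_Dsq c l)
  have hintv : IntegrableOn (fun ζ => f (ζ + l • v)) (Dsq c l) :=
    (hf.comp (continuousOn_id.add continuousOn_const) hcvS).integrableOn_compact
      (isCompact_Dsq c l)
  rw [diffQuot, gridCtr_add, Iavg_add_sub_Iavg_div hint hintv]
  refine abs_Iavg_sub_le hl (hintv.sub hint |>.div_const l) fun ζ hζ => ?_
  have hζξ : dist ζ ξ ≤ l := dist_le_of_mem_Dsq hζ hξ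
  have hlv : ‖l • v‖ = l * ‖v‖ := by rw [norm_smul, Real.norm_of_nonneg hl.le]
  have hdist : dist (ζ + l • v) ξ < δ := by
    calc dist (ζ + l • v) ξ ≤ dist (ζ + l • v) ζ + dist ζ ξ := dist_triangle _ _ _
      _ ≤ l * (‖v‖ + 1) := by rw [dist_self_add_left, hlv]; linarith
      _ < δ := hm
  have hest := hlin ξ (hcS hξ) ζ (hcS hζ) (ζ + l • v) (hcvS ζ hζ)
    (hζξ.trans_lt (by nlinarith [norm_nonneg v])) hdist
  rw [add_sub_cancel_left, map_smul, smul_eq_mul, hlv, Real.norm_eq_abs] at hest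
  have hdiv : (f (ζ + l • v) - f ζ) / l - fderiv ℝ f ξ v
      = (f (ζ + l • v) - f ζ - l * fderiv ℝ f ξ v) / l := by field_simp
  calc |(f (ζ + l • v) - f ζ) / l - fderiv ℝ f ξ v|
      = |f (ζ + l • v) - f ζ - l * fderiv ℝ f ξ v| / l := by rw [hdiv, abs_div, abs_of_pos hl]
    _ ≤ ε * (l * ‖v‖) / l := by gcongr
    _ = ε * ‖v‖ := by field_simp

theorem tendstoUniformlyOnCells_diffQuot {f : ℝ × ℝ → ℝ} {Ω : Set (ℝ × ℝ)} (hΩ : IsOpen Ω)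
    (hSΩ : unitSquare ⊆ Ω) (hf : ContDiffOn ℝ 1 f Ω) (q : ℤ × ℤ) :
    TendstoUniformlyOnCells (diffQuot f q) (fun ξ => fderiv ℝ f ξ ((q.1 : ℝ), (q.2 : ℝ)))
      (offsetCells q) := by
  intro ε hε
  set R := ‖((q.1 : ℝ), (q.2 : ℝ))‖ + 1
  have hR : 0 < R := by positivity
  obtain ⟨δ, hδ, hlin⟩ := isCompact_unitSquare.exists_norm_sub_sub_fderiv_le convex_unitSquare
    hΩ hSΩ hf (div_pos hε hR)
  have hsmall : ∀ᶠ m in atTop, side m * R < δ := by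
    have hlim := tendsto_side_atTop.mul_const R
    rw [zero_mul] at hlim
    exact hlim.eventually (gt_mem_nhds hδ)
  filter_upwards [hsmall] with m hm x hx ξ hξ
  calc _ ≤ ε / R * ‖((q.1 : ℝ), (q.2 : ℝ))‖ :=
        abs_diffQuot_sub_fderiv_le (hf.continuousOn.mono hSΩ) hlin hm hx hξ
    _ ≤ ε / R * R := by gcongr; linarith
    _ = ε := div_mul_cancel₀ ε hR.ne'

end DifferenceQuotients

section OffsetEnergy

theorem TendstoUniformlyOnCells.mul {s t : ℕ → ℤ × ℤ → ℝ} {h k : ℝ × ℝ → ℝ}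
    {good : ℕ → Finset (ℤ × ℤ)} (hs : TendstoUniformlyOnCells s h good)
    (ht : TendstoUniformlyOnCells t k good) (hgood : ∀ m, good m ⊆ grid m) {K : ℝ}
    (hh : ∀ ξ ∈ unitSquare, |h ξ| ≤ K) (hk : ∀ ξ ∈ unitSquare, |k ξ| ≤ K) :
    TendstoUniformlyOnCells (fun m x => s m x * t m x) (fun ξ => h ξ * k ξ) good := by
  intro ε hε
  set η := min 1 (ε / (2 * |K| + 1))
  have hη : 0 < η := lt_min one_pos (by positivity)
  filter_upwards [hs η hη, ht η hη] with m hsm htm x hx ξ hξ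
  have hξS := Dsq_gridCtr_subset (hgood m hx) hξ
  calc |s m x * t m x - h ξ * k ξ| ≤ η * (2 * K + η) :=
        abs_mul_sub_mul_le_of_le (hh ξ hξS) (hk ξ hξS) (hsm x hx ξ hξ) (htm x hx ξ hξ)
    _ ≤ η * (2 * |K| + 1) := by
        gcongr
        · exact le_abs_self K
        · exact min_le_left _ _
    _ ≤ ε / (2 * |K| + 1) * (2 * |K| + 1) := by gcongr; exact min_le_right _ _
    _ = ε := by field_simp

def offsetEnergy (f g : ℝ × ℝ → ℝ) (q : ℤ × ℤ) (m : ℕ) : ℝ :=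
  ∑ x ∈ offsetCells q m,
    (Iavg f (gridCtr m (x + q)) (side m) - Iavg f (gridCtr m x) (side m)) *
      (Iavg g (gridCtr m (x + q)) (side m) - Iavg g (gridCtr m x) (side m))

theorem offsetEnergy_eq_sum_diffQuot (f g : ℝ × ℝ → ℝ) (q : ℤ × ℤ) (m : ℕ) :
    offsetEnergy f g q m =
      ∑ x ∈ offsetCells q m, side m ^ 2 * (diffQuot f q m x * diffQuot g q m x) := by
  refine Finset.sum_congr rfl fun x _ => ?_
  have := (side_pos m).ne'
  simp only [diffQuot]
  field_simp

theorem continuousOn_fderiv_apply {f : ℝ × ℝ → ℝ} {Ω : Set (ℝ × ℝ)} (hΩ : IsOpen Ω)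
    (hf : ContDiffOn ℝ 1 f Ω) (v : ℝ × ℝ) : ContinuousOn (fun ξ => fderiv ℝ f ξ v) Ω :=
  (hf.continuousOn_fderiv_of_isOpen hΩ le_rfl).clm_apply continuousOn_const

theorem tendsto_offsetEnergy {f g : ℝ × ℝ → ℝ} {Ω : Set (ℝ × ℝ)} (hΩ : IsOpen Ω)
    (hSΩ : unitSquare ⊆ Ω) (hf : ContDiffOn ℝ 1 f Ω) (hg : ContDiffOn ℝ 1 g Ω) (q : ℤ × ℤ) :
    Tendsto (offsetEnergy f g q) atTop (𝓝 (∫ ξ in unitSquare,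
      fderiv ℝ f ξ ((q.1 : ℝ), (q.2 : ℝ)) * fderiv ℝ g ξ ((q.1 : ℝ), (q.2 : ℝ)))) := by
  have hfc := (continuousOn_fderiv_apply hΩ hf ((q.1 : ℝ), (q.2 : ℝ))).mono hSΩ
  have hgc := (continuousOn_fderiv_apply hΩ hg ((q.1 : ℝ), (q.2 : ℝ))).mono hSΩ
  obtain ⟨Kf, hKf⟩ := isCompact_unitSquare.exists_bound_of_continuousOn hfc
  obtain ⟨Kg, hKg⟩ := isCompact_unitSquare.exists_bound_of_continuousOn hgc
  have hgood : ∀ m, offsetCells q m ⊆ grid m := fun m => Finset.filter_subset _ _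
  have happrox := (tendstoUniformlyOnCells_diffQuot hΩ hSΩ hf q).mul
    (tendstoUniformlyOnCells_diffQuot hΩ hSΩ hg q) hgood (K := max Kf Kg)
    (fun ξ hξ => (hKf ξ hξ).trans (le_max_left _ _))
    (fun ξ hξ => (hKg ξ hξ).trans (le_max_right _ _))
  rw [show offsetEnergy f g q = _ from funext (offsetEnergy_eq_sum_diffQuot f g q)]
  exact happrox.tendsto_sum (hfc.mul hgc) hgood (card_grid_sdiff_offsetCells_le q)

end OffsetEnergy

section Words

def digit : Fin 4 → ℤ × ℤ := ![(0, 0), (1, 0), (1, 1), (0, 1)]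

-- `F_w S` is the cell with lower-left corner `2⁻ᵐ • wordIdx w`: the letters of `w` give the binary
-- digits of its coordinates, most significant first.
def wordIdx : {m : ℕ} → (Fin m → Fin 4) → ℤ × ℤ
  | 0, _ => 0
  | m + 1, w => (2 : ℤ) ^ m • digit (w 0) + wordIdx (Fin.tail w)

theorem Fc_gridCtr (i : Fin 4) (m : ℕ) (y : ℤ × ℤ) :
    Fc i (gridCtr m y) = gridCtr (m + 1) ((2 : ℤ) ^ m • digit i + y) := by
  have hside : side m = 2 * side (m + 1) := by simp only [side, pow_succ]; ring
  have h2m := two_pow_mul_side m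
  have hq : qv i = (((digit i).1 : ℝ), ((digit i).2 : ℝ)) := by
    fin_cases i <;> simp [qv, digit]
  simp only [Fc, gridCtr, hq, Prod.fst_add, Prod.snd_add, Prod.smul_fst, Prod.smul_snd,
    smul_eq_mul, Int.cast_add, Int.cast_mul, Int.cast_pow, Int.cast_ofNat]
  rw [hside] at h2m ⊢
  congr 1
  · linear_combination -((digit i).1 : ℝ) / 2 * h2m
  · linear_combination -((digit i).2 : ℝ) / 2 * h2m

theorem cellCtr_eq_gridCtr {m : ℕ} (w : Fin m → Fin 4) : cellCtr w = gridCtr m (wordIdx w) := by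
  induction m with
  | zero => simp [cellCtr, Fword, gridCtr, wordIdx, side]
  | succ m ih =>
    rw [wordIdx, ← Fc_gridCtr, ← ih]
    simp only [cellCtr, Fword, List.ofFn_succ, List.foldr_cons, Function.comp_apply]
    rfl

theorem digit_coords (i : Fin 4) :
    ((digit i).1 = 0 ∨ (digit i).1 = 1) ∧ ((digit i).2 = 0 ∨ (digit i).2 = 1) := by
  fin_cases i <;> simp [digit]

theorem digit_injective : Function.Injective digit := by decide

theorem wordIdx_mem_grid {m : ℕ} (w : Fin m → Fin 4) : wordIdx w ∈ grid m := by
  induction m with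
  | zero => simp [wordIdx, grid]
  | succ m ih =>
    have hy := ih (Fin.tail w)
    simp only [grid, Finset.mem_product, Finset.mem_Ico] at hy ⊢
    simp only [wordIdx, Prod.fst_add, Prod.snd_add, Prod.smul_fst, Prod.smul_snd, smul_eq_mul,
      pow_succ]
    obtain ⟨h₁ | h₁, h₂ | h₂⟩ := digit_coords (w 0) <;> rw [h₁, h₂] <;> omega

theorem wordIdx_injective (m : ℕ) : Function.Injective (wordIdx (m := m)) := by
  induction m with
  | zero => intro w w' _; funext i; exact i.elim0
  | succ m ih =>
    intro w w' h
    have hy := wordIdx_mem_grid (Fin.tail w)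
    have hy' := wordIdx_mem_grid (Fin.tail w')
    simp only [grid, Finset.mem_product, Finset.mem_Ico] at hy hy'
    simp only [wordIdx, Prod.ext_iff, Prod.fst_add, Prod.snd_add, Prod.smul_fst, Prod.smul_snd,
      smul_eq_mul] at h
    have hsplit : digit (w 0) = digit (w' 0) ∧ wordIdx (Fin.tail w) = wordIdx (Fin.tail w') := by
      simp only [Prod.ext_iff]
      obtain ⟨h₁ | h₁, h₂ | h₂⟩ := digit_coords (w 0) <;>
      obtain ⟨h₁' | h₁', h₂' | h₂'⟩ := digit_coords (w' 0) <;>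
      rw [h₁, h₂, h₁', h₂'] at h ⊢ <;> omega
    rw [← Fin.cons_self_tail w, ← Fin.cons_self_tail w', digit_injective hsplit.1, ih hsplit.2]

theorem sum_words_eq_sum_grid (m : ℕ) (F : ℤ × ℤ → ℝ) :
    ∑ w : Fin m → Fin 4, F (wordIdx w) = ∑ x ∈ grid m, F x := by
  have himage : (Finset.univ : Finset (Fin m → Fin 4)).image wordIdx = grid m := by
    refine Finset.eq_of_subset_of_card_le
      (Finset.image_subset_iff.2 fun w _ => wordIdx_mem_grid w) ?_
    rw [Finset.card_image_of_injective _ (wordIdx_injective m), grid, Finset.card_product,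
      card_Ico_two_pow, Finset.card_univ, Fintype.card_fun, Fintype.card_fin, Fintype.card_fin,
      ← mul_pow]
    norm_num
  rw [← himage, Finset.sum_image fun w _ w' _ h => wordIdx_injective m h]

theorem Bav_eq (f : ℝ × ℝ → ℝ) {m : ℕ} (w : Fin m → Fin 4) :
    Bav f w = Iavg f (gridCtr m (wordIdx w)) (side m) := by
  rw [Bav, cellCtr_eq_gridCtr, side]

end Words

section Neighbors

def nbrOffsets (p : ℤ × ℤ) : Finset (ℤ × ℤ) :=
  {(p.1, p.2), (p.1, -p.2), (-p.1, p.2), (-p.1, -p.2),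
    (p.2, p.1), (p.2, -p.1), (-p.2, p.1), (-p.2, -p.1)}

theorem abs_sub_gridCoord_eq_iff (m : ℕ) (a b : ℤ) {c : ℤ} (hc : 0 ≤ c) :
    |((b : ℝ) + 1 / 2) * side m - ((a : ℝ) + 1 / 2) * side m| = c * side m ↔
      b - a = c ∨ b - a = -c := by
  have hl := side_pos m
  rw [show ((b : ℝ) + 1 / 2) * side m - ((a : ℝ) + 1 / 2) * side m = ((b - a : ℤ) : ℝ) * side m by
    push_cast; ring, abs_mul, abs_of_pos hl, mul_left_inj' hl.ne', ← Int.cast_abs, Int.cast_inj,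
    abs_eq hc]

theorem isNbr_gridCtr_iff {p : ℤ × ℤ} (hp₁ : 0 ≤ p.1) (hp₂ : 0 ≤ p.2) (m : ℕ) (x y : ℤ × ℤ) :
    isNbr p (side m) (gridCtr m x) (gridCtr m y) ↔ y - x ∈ nbrOffsets p := by
  simp only [isNbr, gridCtr, abs_sub_gridCoord_eq_iff m _ _ hp₁, abs_sub_gridCoord_eq_iff m _ _ hp₂,
    nbrOffsets, Finset.mem_insert, Finset.mem_singleton, Prod.ext_iff, Prod.fst_sub, Prod.snd_sub]
  tauto

theorem sum_sum_ite_sub_mem {G : Type*} [AddCommGroup G] [DecidableEq G] (s O : Finset G)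
    (F : G → G → ℝ) :
    ∑ x ∈ s, ∑ y ∈ s, (if y - x ∈ O then F x y else 0) =
      ∑ q ∈ O, ∑ x ∈ s.filter (· + q ∈ s), F x (x + q) := by
  have hinner : ∀ x, ∑ y ∈ s, (if y - x ∈ O then F x y else 0) =
      ∑ q ∈ O, if x + q ∈ s then F x (x + q) else 0 := fun x => by
    rw [← Finset.sum_filter, ← Finset.sum_filter]
    refine Finset.sum_nbij' (· - x) (x + ·) ?_ ?_ ?_ ?_ ?_ <;>
      simp +contextual [Finset.mem_filter, add_comm x]
  simp only [hinner, Finset.sum_filter]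
  exact Finset.sum_comm

theorem Em_eq {P : Finset (ℤ × ℤ)} (hP : ∀ p ∈ P, 0 ≤ p.1 ∧ 0 ≤ p.2) (A : ℤ × ℤ → ℝ)
    (f g : ℝ × ℝ → ℝ) (m : ℕ) :
    Em P A f g m = 1 / 2 * (∑ p ∈ P, ((p.1 : ℝ) ^ 2 + (p.2 : ℝ) ^ 2) * cP p * A p)⁻¹ / 2 *
      ∑ p ∈ P, A p * ∑ q ∈ nbrOffsets p, offsetEnergy f g q m := by
  rw [Em]
  congr 1
  refine Finset.sum_congr rfl fun p hp => ?_
  congr 1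
  simp only [Bav_eq, cellCtr_eq_gridCtr, show ((1 : ℝ) / 2) ^ m = side m from rfl, offsetEnergy,
    offsetCells]
  rw [← sum_sum_ite_sub_mem (grid m) (nbrOffsets p) fun x y =>
    (Iavg f (gridCtr m y) (side m) - Iavg f (gridCtr m x) (side m)) *
      (Iavg g (gridCtr m y) (side m) - Iavg g (gridCtr m x) (side m)), ← sum_words_eq_sum_grid]
  refine Finset.sum_congr rfl fun w _ => ?_
  rw [← sum_words_eq_sum_grid]
  refine Finset.sum_congr rfl fun w' _ => ?_
  simp only [isNbr_gridCtr_iff (hP p hp).1 (hP p hp).2]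

end Neighbors

section DirichletForm

-- If `p.1 = 0` or `p.1 = p.2` the eight offsets coincide in pairs, which `c_p = 1 / 2` compensates.
theorem sum_nbrOffsets_mul {p : ℤ × ℤ} (hp : 0 ≤ p.1 ∧ p.1 ≤ p.2 ∧ p.2 ≠ 0) (a b c d : ℝ) :
    ∑ q ∈ nbrOffsets p, ((q.1 : ℝ) * a + q.2 * b) * (q.1 * c + q.2 * d) =
      4 * cP p * ((p.1 : ℝ) ^ 2 + (p.2 : ℝ) ^ 2) * (a * c + b * d) := by
  obtain ⟨i, j⟩ := p
  obtain ⟨hi, hij, hj⟩ := hp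
  dsimp only at hi hij hj ⊢
  rcases eq_or_lt_of_le hi with rfl | hi
  · have hO : nbrOffsets (0, j) = {(0, j), (0, -j), (j, 0), (-j, 0)} := by
      ext q; simp only [nbrOffsets, Finset.mem_insert, Finset.mem_singleton, Prod.ext_iff]; omega
    rw [hO, cP, if_neg (by omega), if_pos (by simp)]
    rw [Finset.sum_insert, Finset.sum_insert, Finset.sum_insert, Finset.sum_singleton]
    · push_cast; ring
    all_goals simp only [Finset.mem_insert, Finset.mem_singleton, Prod.ext_iff]; omega
  rcases eq_or_lt_of_le hij with rfl | hij
  · have hO : nbrOffsets (i, i) = {(i, i), (i, -i), (-i, i), (-i, -i)} := by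
      ext q; simp only [nbrOffsets, Finset.mem_insert, Finset.mem_singleton, Prod.ext_iff]; omega
    rw [hO, cP, if_neg (by omega), if_pos (by simp)]
    rw [Finset.sum_insert, Finset.sum_insert, Finset.sum_insert, Finset.sum_singleton]
    · push_cast; ring
    all_goals simp only [Finset.mem_insert, Finset.mem_singleton, Prod.ext_iff]; omega
  · rw [nbrOffsets, cP, if_neg (by omega), if_neg (by omega)]
    rw [Finset.sum_insert, Finset.sum_insert, Finset.sum_insert, Finset.sum_insert,
      Finset.sum_insert, Finset.sum_insert, Finset.sum_insert, Finset.sum_singleton]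
    · push_cast; ring
    all_goals simp only [Finset.mem_insert, Finset.mem_singleton, Prod.ext_iff]; omega

theorem fderiv_apply_intCast (f : ℝ × ℝ → ℝ) (ξ : ℝ × ℝ) (q : ℤ × ℤ) :
    fderiv ℝ f ξ ((q.1 : ℝ), (q.2 : ℝ)) = q.1 * pd1 f ξ + q.2 * pd2 f ξ := by
  have hq : ((q.1 : ℝ), (q.2 : ℝ)) =
      (q.1 : ℝ) • ((1 : ℝ), (0 : ℝ)) + (q.2 : ℝ) • ((0 : ℝ), (1 : ℝ)) := by
    simp
  rw [hq, map_add, map_smul, map_smul, smul_eq_mul, smul_eq_mul, pd1, pd2]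

theorem sum_nbrOffsets_integral {f g : ℝ × ℝ → ℝ} {Ω : Set (ℝ × ℝ)} (hΩ : IsOpen Ω)
    (hSΩ : unitSquare ⊆ Ω) (hf : ContDiffOn ℝ 1 f Ω) (hg : ContDiffOn ℝ 1 g Ω) {p : ℤ × ℤ}
    (hp : 0 ≤ p.1 ∧ p.1 ≤ p.2 ∧ p.2 ≠ 0) :
    ∑ q ∈ nbrOffsets p, ∫ ξ in unitSquare,
        fderiv ℝ f ξ ((q.1 : ℝ), (q.2 : ℝ)) * fderiv ℝ g ξ ((q.1 : ℝ), (q.2 : ℝ)) =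
      4 * cP p * ((p.1 : ℝ) ^ 2 + (p.2 : ℝ) ^ 2) *
        ∫ ξ in unitSquare, (pd1 f ξ * pd1 g ξ + pd2 f ξ * pd2 g ξ) := by
  have hint : ∀ q ∈ nbrOffsets p, IntegrableOn (fun ξ =>
      fderiv ℝ f ξ ((q.1 : ℝ), (q.2 : ℝ)) * fderiv ℝ g ξ ((q.1 : ℝ), (q.2 : ℝ))) unitSquare :=
    fun q _ => (((continuousOn_fderiv_apply hΩ hf _).mul (continuousOn_fderiv_apply hΩ hg _)).mono
      hSΩ).integrableOn_compact isCompact_unitSquare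
  rw [← integral_finsetSum _ hint, ← integral_const_mul]
  simp only [fderiv_apply_intCast, sum_nbrOffsets_mul hp]

end DirichletForm

theorem stmt14_general (P : Finset (ℤ × ℤ))
    (hP : ∀ p ∈ P, 0 ≤ p.1 ∧ p.1 ≤ p.2 ∧ p.2 ≠ 0)
    (A : ℤ × ℤ → ℝ)
    (hA2 : ∑ p ∈ P, ((p.1 : ℝ) ^ 2 + (p.2 : ℝ) ^ 2) * cP p * A p ≠ 0)
    (Ω : Set (ℝ × ℝ)) (hΩ : IsOpen Ω)
    (hSΩ : Set.Icc (0 : ℝ) 1 ×ˢ Set.Icc (0 : ℝ) 1 ⊆ Ω)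
    (f g : ℝ × ℝ → ℝ) (hf : ContDiffOn ℝ 1 f Ω) (hg : ContDiffOn ℝ 1 g Ω) :
    Filter.Tendsto (fun m : ℕ => Em P A f g m) Filter.atTop
      (𝓝 (∫ ξ in Set.Icc (0 : ℝ) 1 ×ˢ Set.Icc (0 : ℝ) 1,
        (pd1 f ξ * pd1 g ξ + pd2 f ξ * pd2 g ξ))) := by
  set Q := ∑ p ∈ P, ((p.1 : ℝ) ^ 2 + (p.2 : ℝ) ^ 2) * cP p * A p
  set I := ∫ ξ in unitSquare, (pd1 f ξ * pd1 g ξ + pd2 f ξ * pd2 g ξ)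
  have hlim := (tendsto_finsetSum P fun p _ => (tendsto_finsetSum (nbrOffsets p) fun q _ =>
    tendsto_offsetEnergy hΩ hSΩ hf hg q).const_mul (A p)).const_mul (1 / 2 * Q⁻¹ / 2)
  have hvalue : 1 / 2 * Q⁻¹ / 2 * ∑ p ∈ P, A p * (4 * cP p * ((p.1 : ℝ) ^ 2 + (p.2 : ℝ) ^ 2) * I)
      = I := by
    rw [show ∑ p ∈ P, A p * (4 * cP p * ((p.1 : ℝ) ^ 2 + (p.2 : ℝ) ^ 2) * I) = 4 * Q * I by
      simp only [Q, Finset.sum_mul, Finset.mul_sum]; exact Finset.sum_congr rfl fun p _ => by ring]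
    field_simp
    ring
  rw [Finset.sum_congr rfl fun p hp =>
    congrArg (A p * ·) (sum_nbrOffsets_integral hΩ hSΩ hf hg (hP p hp)), hvalue,
    ← funext (Em_eq (fun p hp => ⟨(hP p hp).1, (hP p hp).1.trans (hP p hp).2.1⟩) A f g)] at hlim
  exact hlim

/-- the discrete energies converge to the Dirichlet energy (Theorem 3.2). -/
theorem stmt14 (P : Finset (ℤ × ℤ))
    (hP : ∀ p ∈ P, 0 ≤ p.1 ∧ p.1 ≤ p.2 ∧ p.2 ≠ 0)
    (A : ℤ × ℤ → ℝ) (hA : 8 * ∑ p ∈ P, cP p * A p = 1)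
    (hA2 : ∑ p ∈ P, ((p.1 : ℝ) ^ 2 + (p.2 : ℝ) ^ 2) * cP p * A p ≠ 0)
    (Ω : Set (ℝ × ℝ)) (hΩ : IsOpen Ω)
    (hSΩ : Set.Icc (0 : ℝ) 1 ×ˢ Set.Icc (0 : ℝ) 1 ⊆ Ω)
    (f g : ℝ × ℝ → ℝ) (hf : ContDiffOn ℝ 1 f Ω) (hg : ContDiffOn ℝ 1 g Ω) :
    Filter.Tendsto (fun m : ℕ => Em P A f g m) Filter.atTop
      (𝓝 (∫ ξ in Set.Icc (0 : ℝ) 1 ×ˢ Set.Icc (0 : ℝ) 1,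
        (pd1 f ξ * pd1 g ξ + pd2 f ξ * pd2 g ξ))) :=
  stmt14_general P hP A hA2 Ω hΩ hSΩ f g hf hg
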